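/- arXiv:1709.02215 — 4 statements merged into one kernel-verified Lean document; each statement's English description precedes it below -/
import Mathlib

section
/- Let $(Z_n)_{n\ge 1}$ be i.i.d. real-valued random variables with $E[Z_1]=\mu$ finite, and let $S_n = \sum_{i=1}^n Z_i$. Then for every $r<\mu$, $P\big(\frac{S_n}{n}\ge r \text{ for all } n=1,2,\dots\big) > 0$. -/
open MeasureTheory ProbabilityTheory Filter Real
open scoped Topology

/-!
By the strong law of large numbers, almost surely `S n / n → μ > r`, so the deficit `n r - S n`
is bounded above; hence `∀ n, n r - S n ≤ C` has positive probability for some constant `C`.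
Choose `N` with `C ≤ N (μ - r)`. With positive probability the first `N` steps are all `≥ μ`
(as `Z 0 ≥ E[Z 0]` with positive probability), building a reserve of `N (μ - r) ≥ C` above the
line `n r`; independently of them, the walk shifted by `N` has the law of the original walk, so
with positive probability it never falls more than `C` below that line.
-/

lemma bddAbove_range_mul_sub_sum_of_tendsto {x : ℕ → ℝ} {m r : ℝ}
    (hx : Tendsto (fun n : ℕ => (∑ i ∈ Finset.range n, x i) / n) atTop (𝓝 m))
    (hr : r < m) :
    BddAbove (Set.range fun n : ℕ => n * r - ∑ i ∈ Finset.range n, x i) := by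
  refine (isBoundedUnder_of_eventually_le (a := 0) ?_).bddAbove_range
  filter_upwards [hx.eventually (eventually_gt_nhds hr), eventually_gt_atTop 0] with n hn hn0
  rw [lt_div_iff₀ (by exact_mod_cast hn0)] at hn
  linarith

lemma mul_le_sum_range_of_head_of_shift {x : ℕ → ℝ} {N : ℕ} {a r C : ℝ} (hra : r ≤ a)
    (hC : C ≤ N * (a - r)) (hhead : ∀ i < N, a ≤ x i)
    (hshift : ∀ n : ℕ, n * r - ∑ i ∈ Finset.range n, x (N + i) ≤ C) (n : ℕ) :
    n * r ≤ ∑ i ∈ Finset.range n, x i := by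
  have hsum_head : ∀ k ≤ N, k * a ≤ ∑ i ∈ Finset.range k, x i := fun k hk => by
    simpa using Finset.card_nsmul_le_sum _ _ a fun i hi =>
      hhead i ((Finset.mem_range.1 hi).trans_le hk)
  rcases le_or_gt n N with hn | hn
  · nlinarith [hsum_head n hn, (Nat.cast_nonneg n : (0 : ℝ) ≤ n)]
  · obtain ⟨m, rfl⟩ := Nat.exists_eq_add_of_le hn.le
    rw [Finset.sum_range_add]
    push_cast
    linarith [hsum_head N le_rfl, hshift m]

namespace ProbabilityTheory

variable {Ω β : Type*} [MeasurableSpace Ω] [mβ : MeasurableSpace β] {P : Measure Ω}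

lemma exists_measure_pos_forall_le_of_ae_bddAbove [NeZero P] {ι : Type*} {f : ι → Ω → ℝ}
    (h : ∀ᵐ ω ∂P, BddAbove (Set.range fun i => f i ω)) :
    ∃ C : ℝ, 0 < P {ω | ∀ i, f i ω ≤ C} := by
  have hcover : ∀ᵐ ω ∂P, ω ∈ ⋃ C : ℕ, {ω | ∀ i, f i ω ≤ C} := by
    filter_upwards [h] with ω ⟨b, hb⟩
    obtain ⟨C, hC⟩ := exists_nat_ge b
    exact Set.mem_iUnion.2 ⟨C, fun i => (hb ⟨i, rfl⟩).trans hC⟩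
  have hpos : P (⋃ C : ℕ, {ω | ∀ i, f i ω ≤ C}) ≠ 0 := fun h0 =>
    ((measure_eq_zero_iff_ae_notMem.1 h0).and hcover).exists.elim fun _ hω => hω.1 hω.2
  obtain ⟨C, hC⟩ := exists_measure_pos_of_not_measure_iUnion_null hpos
  exact ⟨C, hC⟩

lemma identDistrib_shift {Z : ℕ → Ω → β} (hZ : ∀ n, Measurable (Z n))
    (hlaw : ∀ n, P.map (Z n) = P.map (Z 0)) (hindep : iIndepFun Z P) (k : ℕ) :
    IdentDistrib (fun ω i => Z (k + i) ω) (fun ω i => Z i ω) P P where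
  aemeasurable_fst := (measurable_pi_lambda _ fun i => hZ (k + i)).aemeasurable
  aemeasurable_snd := (measurable_pi_lambda _ hZ).aemeasurable
  map_eq := by
    rw [(hindep.precomp (add_right_injective k)).map_fun_eq_infinitePi_map fun i => hZ (k + i),
      hindep.map_fun_eq_infinitePi_map hZ]
    simp only [hlaw]

lemma iIndepFun.indepFun_head_shift {Z : ℕ → Ω → β} (hZ : ∀ n, Measurable (Z n))
    (hindep : iIndepFun Z P) (N : ℕ) :
    IndepFun (fun ω (i : Fin N) => Z i ω) (fun ω i => Z (N + i) ω) P := by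
  let σ : Set ℕ → MeasurableSpace Ω := fun S => ⨆ j ∈ S, MeasurableSpace.comap (Z j) mβ
  have hmeas {S : Set ℕ} {i : ℕ} (hi : i ∈ S) : Measurable[σ S] (Z i) :=
    (comap_measurable (Z i)).mono
      (le_iSup₂ (f := fun j (_ : j ∈ S) => MeasurableSpace.comap (Z j) mβ) i hi) le_rfl
  have hsplit : Indep (σ (Set.Iio N)) (σ (Set.Ici N)) P :=
    indep_iSup_of_disjoint (fun i => (hZ i).comap_le) hindep.iIndep
      (Set.Iio_disjoint_Ici (le_refl N))
  have hhead : Measurable[σ (Set.Iio N)] fun ω (i : Fin N) => Z i ω :=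
    (@measurable_pi_iff _ _ _ (σ _) _ _).2 fun i => hmeas i.2
  have htail : Measurable[σ (Set.Ici N)] fun ω i => Z (N + i) ω :=
    (@measurable_pi_iff _ _ _ (σ _) _ _).2 fun i => hmeas (Nat.le_add_right N i)
  rw [IndepFun_iff_Indep]
  exact indep_of_indep_of_le_right (indep_of_indep_of_le_left hsplit hhead.comap_le)
    htail.comap_le

lemma iIndepFun.measure_forall_mem_pos {Z : ℕ → Ω → β} (hZ : ∀ n, Measurable (Z n))
    (hlaw : ∀ n, P.map (Z n) = P.map (Z 0)) (hindep : iIndepFun Z P) {s : Set β}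
    (hs : MeasurableSet s) (hpos : 0 < P (Z 0 ⁻¹' s)) (N : ℕ) :
    0 < P ((fun ω (i : Fin N) => Z i ω) ⁻¹' Set.univ.pi fun _ => s) := by
  rw [← Measure.map_apply (measurable_pi_lambda (fun ω (i : Fin N) => Z i ω) fun i => hZ i)
      (.univ_pi fun _ => hs),
    (hindep.precomp Fin.val_injective).map_fun_eq_pi_map (f := fun (i : Fin N) => Z i)
      fun i => (hZ i).aemeasurable]
  have := hindep.isProbabilityMeasure
  have := Measure.isProbabilityMeasure_map (μ := P) (hZ 0).aemeasurable
  simp only [hlaw, Measure.pi_pi, Finset.prod_const, Finset.card_univ, Fintype.card_fin,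
    Measure.map_apply (hZ 0) hs]
  exact ENNReal.pow_pos hpos _

end ProbabilityTheory

theorem stmt10
    {Ω : Type*} [MeasureSpace Ω] [IsProbabilityMeasure (ℙ : Measure Ω)]
    (Z : ℕ → Ω → ℝ) (hZmeas : ∀ n, Measurable (Z n))
    (hlaw : ∀ n, Measure.map (Z n) ℙ = Measure.map (Z 0) ℙ)
    (hindep : iIndepFun Z ℙ)
    (hint : Integrable (Z 0) ℙ)
    (μ : ℝ) (hμ : μ = ∫ ω, Z 0 ω ∂ℙ)
    (r : ℝ) (hr : r < μ) :
    0 < ℙ {ω | ∀ n : ℕ, 1 ≤ n → (n : ℝ) * r ≤ ∑ i ∈ Finset.range n, Z i ω} := by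
  have hident : ∀ i, IdentDistrib (Z i) (Z 0) ℙ ℙ := fun i =>
    ⟨(hZmeas i).aemeasurable, (hZmeas 0).aemeasurable, hlaw i⟩
  have hslln := strong_law_ae_real Z hint (fun i j hij => hindep.indepFun hij) hident
  obtain ⟨C, hC⟩ := exists_measure_pos_forall_le_of_ae_bddAbove
    (hslln.mono fun ω hω => bddAbove_range_mul_sub_sum_of_tendsto hω (hμ ▸ hr))
  obtain ⟨N, hN⟩ : ∃ N : ℕ, C ≤ N * (μ - r) :=
    ⟨⌈C / (μ - r)⌉₊, (div_le_iff₀ (sub_pos.2 hr)).1 (Nat.le_ceil _)⟩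
  set B : Set (ℕ → ℝ) := {x | ∀ n : ℕ, n * r - ∑ i ∈ Finset.range n, x i ≤ C}
  have hB : MeasurableSet B := by
    simp only [B, Set.ofPred_forall]
    exact .iInter fun n => measurableSet_le (by fun_prop) measurable_const
  have hhead := hindep.measure_forall_mem_pos hZmeas hlaw measurableSet_Ici
    (hμ ▸ measure_integral_le_pos hint) N
  have htail : 0 < ℙ ((fun ω i => Z (N + i) ω) ⁻¹' B) := by
    rwa [(identDistrib_shift hZmeas hlaw hindep N).measure_mem_eq hB]
  refine (ENNReal.mul_pos hhead.ne' htail.ne').trans_le ?_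
  rw [← (hindep.indepFun_head_shift hZmeas N).measure_inter_preimage_eq_mul _ _
    (.univ_pi fun _ => measurableSet_Ici) hB]
  refine measure_mono fun ω ⟨hω₁, hω₂⟩ n _ => ?_
  exact mul_le_sum_range_of_head_of_shift (x := fun i => Z i ω) hr.le hN
    (fun i hi => hω₁ ⟨i, hi⟩ trivial) hω₂ n
end

section
/- Let $r < \mu$. Then $\lim_{N\to\infty} P\big(\min_{0\le j\le N-1} S_{j,N+j} \ge N r\big) = 1$. -/
open MeasureTheory ProbabilityTheory Filter Real

/-- The Legendre–Fenchel transform `I(r) = sup_{λ} (λ r - log E[e^{λ W}])` of the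
logarithmic moment generating function of the law `P` (the supremum being taken over
those `λ` for which the moment generating function is finite; for the other `λ` the
expression is `-∞` and does not contribute to the supremum). -/
noncomputable def rateFn (P : Measure ℝ) (r : ℝ) : ℝ :=
  ⨆ t : {t : ℝ // Integrable (fun x => Real.exp (t * x)) P},
    (t.1 * r - Real.log (∫ x, Real.exp (t.1 * x) ∂P))

/-- `seg W j k ω = S_k - S_j`, the increment of the random walk with steps `W`. -/
noncomputable def seg {Ω : Type*} (W : ℕ → Ω → ℝ) (j k : ℕ) (ω : Ω) : ℝ :=
  ∑ m ∈ Finset.Ico j k, W m ω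

/-!
Fix `t > 0` with `c := e^{tr} E[e^{-tW}] < 1`; it exists because `s ↦ e^{-rs} E[e^{sW}]` equals
`1` at `s = 0` with derivative `μ - r > 0` there. By the Chernoff bound and independence, each
of the `N` windows satisfies `P(S_{j,N+j} ≤ N r) ≤ c^N`, so the union bound makes the event fail
with probability at most `N c^N → 0`.
-/

namespace ProbabilityTheory

open Finset

variable {Ω : Type*} {mΩ : MeasurableSpace Ω} {X : Ω → ℝ} {μ : Measure Ω}

lemma zero_mem_interior_integrableExpSet {t : ℝ} (ht : 0 < t)
    (h_pos : t ∈ integrableExpSet X μ) (h_neg : -t ∈ integrableExpSet X μ) :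
    0 ∈ interior (integrableExpSet X μ) :=
  mem_interior_iff_mem_nhds.mpr <| Filter.mem_of_superset (Icc_mem_nhds (by linarith) ht)
    (convex_integrableExpSet.ordConnected.out h_neg h_pos)

lemma exists_pos_exp_mul_mgf_neg_lt_one [IsProbabilityMeasure μ]
    (h0 : 0 ∈ interior (integrableExpSet X μ)) {r : ℝ} (hr : r < μ[X]) :
    ∃ t > 0, -t ∈ integrableExpSet X μ ∧ exp (t * r) * mgf X μ (-t) < 1 := by
  set g : ℝ → ℝ := fun s ↦ exp (-r * s) * mgf X μ s
  have hg : HasDerivAt g (μ[X] - r) 0 :=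
    (((hasDerivAt_id (0 : ℝ)).const_mul (-r)).exp.mul (hasDerivAt_mgf h0)).congr_deriv
      (by simp; ring)
  obtain ⟨s, ⟨hs_slope, hs_neg⟩, hs_mem⟩ :=
    (((hasDerivAt_iff_tendsto_slope.mp hg).eventually
      (eventually_gt_nhds (sub_pos.mpr hr))).filter_mono (nhdsLT_le_nhdsNE 0)
      |>.and self_mem_nhdsWithin |>.and
        (nhdsWithin_le_nhds (isOpen_interior.mem_nhds h0))).exists
  refine ⟨-s, neg_pos.mpr hs_neg, by simpa using interior_subset hs_mem, ?_⟩
  have hg0 : g 0 = 1 := by simp [g]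
  have hgs : g s < 1 := by
    rw [slope_def_field, hg0, sub_zero] at hs_slope
    rcases div_pos_iff.mp hs_slope with h | h <;> linarith [h.1, h.2]
  simpa only [g, neg_neg, neg_mul, mul_neg, mul_comm] using hgs

lemma iIndepFun.measureReal_sum_le_le_pow {ι : Type*} [IsFiniteMeasure μ] {W : ι → Ω → ℝ}
    (hindep : iIndepFun W μ) (hmeas : ∀ i, Measurable (W i)) {P : Measure ℝ}
    (hlaw : ∀ i, μ.map (W i) = P) {t : ℝ} (ht : 0 ≤ t) (hint : -t ∈ integrableExpSet id P)
    (s : Finset ι) (r : ℝ) :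
    μ.real {ω | ∑ i ∈ s, W i ω ≤ #s * r} ≤ (exp (t * r) * mgf id P (-t)) ^ #s := by
  have hint_W (i : ι) : Integrable (fun ω ↦ exp (-t * W i ω)) μ := by
    rw [← hlaw i] at hint
    exact (integrable_map_measure (by fun_prop) (hmeas i).aemeasurable).mp hint
  have hmgf_W (i : ι) : mgf (W i) μ (-t) = mgf id P (-t) := by
    rw [← hlaw i, mgf_id_map (hmeas i).aemeasurable]
  calc μ.real {ω | ∑ i ∈ s, W i ω ≤ #s * r}
      ≤ exp (t * (#s * r)) * mgf (∑ i ∈ s, W i) μ (-t) := by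
        simpa [Finset.sum_apply] using measure_le_le_exp_mul_mgf (#s * r) (neg_nonpos.mpr ht)
          (hindep.integrable_exp_mul_sum hmeas fun i _ ↦ hint_W i)
    _ = (exp (t * r) * mgf id P (-t)) ^ #s := by
        rw [hindep.mgf_sum hmeas, prod_congr rfl fun i _ ↦ hmgf_W i, prod_const,
          mul_pow, ← exp_nat_mul]
        ring_nf

lemma one_sub_mul_pow_le_measureReal_forall_le_seg [IsProbabilityMeasure μ] {W : ℕ → Ω → ℝ}
    (hindep : iIndepFun W μ) (hmeas : ∀ i, Measurable (W i)) {P : Measure ℝ}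
    (hlaw : ∀ i, μ.map (W i) = P) {t : ℝ} (ht : 0 ≤ t) (hint : -t ∈ integrableExpSet id P)
    (N : ℕ) (r : ℝ) :
    1 - N * (exp (t * r) * mgf id P (-t)) ^ N ≤
      μ.real {ω | ∀ j < N, (N : ℝ) * r ≤ seg W j (N + j) ω} := by
  set c := exp (t * r) * mgf id P (-t)
  set A := {ω | ∀ j < N, (N : ℝ) * r ≤ seg W j (N + j) ω}
  have hAc : Aᶜ ⊆ ⋃ j ∈ range N, {ω | seg W j (N + j) ω ≤ N * r} := by
    intro ω hω
    simp only [A, Set.mem_compl_iff, Set.mem_ofPred_eq, not_forall, not_le] at hω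
    obtain ⟨j, hj, hlt⟩ := hω
    exact Set.mem_biUnion (mem_range.mpr hj) hlt.le
  have hseg (j : ℕ) : μ.real {ω | seg W j (N + j) ω ≤ N * r} ≤ c ^ N := by
    simpa [seg] using hindep.measureReal_sum_le_le_pow hmeas hlaw ht hint (Ico j (N + j)) r
  have hAc_le : μ.real Aᶜ ≤ N * c ^ N :=
    calc μ.real Aᶜ ≤ ∑ j ∈ range N, μ.real {ω | seg W j (N + j) ω ≤ N * r} :=
          (measureReal_mono hAc (measure_ne_top _ _)).trans (measureReal_biUnion_finset_le _ _)
      _ ≤ ∑ j ∈ range N, c ^ N := sum_le_sum fun j _ ↦ hseg j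
      _ = N * c ^ N := by simp
  have hcover := measureReal_union_le (μ := μ) A Aᶜ
  rw [Set.union_compl_self, probReal_univ] at hcover
  linarith

end ProbabilityTheory

theorem stmt14
    {Ω : Type*} [MeasureSpace Ω] [IsProbabilityMeasure (ℙ : Measure Ω)]
    (W : ℕ → Ω → ℝ) (hWmeas : ∀ n, Measurable (W n))
    (P : Measure ℝ) [IsProbabilityMeasure P]
    (hlaw : ∀ n, Measure.map (W n) ℙ = P)
    (hindep : iIndepFun W ℙ)
    (t₀ : ℝ) (ht₀ : 0 < t₀)
    (hmgfPos : Integrable (fun x => Real.exp (t₀ * x)) P)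
    (hmgfNeg : Integrable (fun x => Real.exp (-t₀ * x)) P)
    (μ : ℝ) (hμ : μ = ∫ x, x ∂P)
    (r : ℝ) (hr : r < μ) :
    Tendsto (fun N : ℕ => ℙ {ω | ∀ j < N, (N : ℝ) * r ≤ seg W j (N + j) ω})
      atTop (nhds 1) := by
  obtain ⟨t, ht, hint, hc⟩ := exists_pos_exp_mul_mgf_neg_lt_one
    (zero_mem_interior_integrableExpSet ht₀ hmgfPos hmgfNeg) (hμ ▸ hr : r < P[id])
  set c := exp (t * r) * mgf id P (-t)
  have hc0 : 0 ≤ c := mul_nonneg (exp_pos _).le mgf_nonneg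
  have hlower : Tendsto (fun N : ℕ ↦ 1 - N * c ^ N) atTop (nhds 1) := by
    simpa using tendsto_const_nhds.sub (tendsto_self_mul_const_pow_of_lt_one hc0 hc)
  have hreal : Tendsto
      (fun N : ℕ ↦ (ℙ : Measure Ω).real {ω | ∀ j < N, (N : ℝ) * r ≤ seg W j (N + j) ω})
      atTop (nhds 1) :=
    tendsto_of_tendsto_of_tendsto_of_le_of_le hlower tendsto_const_nhds
      (fun N ↦ one_sub_mul_pow_le_measureReal_forall_le_seg hindep hWmeas hlaw ht.le hint N r)
      (fun _ ↦ measureReal_le_one)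
  simpa [ofReal_measureReal] using ENNReal.tendsto_ofReal hreal
end

section
/- Let $r\in\mathbb{R}$ and $N\ge 1$ be such that $P(S_j \ge jr \text{ for all } j=1,\dots,N) > 0$. Then for every bounded measurable function $f:\mathbb{R}^N\to\mathbb{R}$ that is nondecreasing in each coordinate, $E\big[f(W_1,\dots,W_N) \,\big|\, S_j \ge jr \text{ for all } j=1,\dots,N\big] \ge E\big[f(W_1,\dots,W_N)\big]$. -/
/-!
Write `A` for the conditioning event. It is the preimage, under the independent vector
`X = (W 0, …, W (N-1))`, of an upper set `B ⊆ ℝ^N`, so the claim `E[f X] · P(A) ≤ E[f X; A]`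
is Harris' inequality for the monotone functions `f` and `1_B` under the product law of `X`.
Harris' inequality is proved by induction on the number of coordinates: integrating out all but
the first coordinate keeps functions monotone, and in one variable it is Chebyshev's inequality
`0 ≤ ∬ (F y - F x) (G y - G x) dμ(x) dμ(y)`.
-/

open MeasureTheory ProbabilityTheory Filter Real

theorem monotone_of_monotone_update {ι β : Type*} [Fintype ι] [DecidableEq ι] {α : ι → Type*}
    [∀ i, Preorder (α i)] [Preorder β] {f : (∀ i, α i) → β}
    (hf : ∀ i x, Monotone fun t => f (Function.update x i t)) : Monotone f := by
  intro x y hxy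
  have key : ∀ s : Finset ι, f x ≤ f (s.piecewise y x) := by
    intro s
    induction s using Finset.induction_on with
    | empty => simp
    | insert i s hi ih =>
      calc f x ≤ f (s.piecewise y x) := ih
        _ = f (Function.update (s.piecewise y x) i (x i)) := by
          rw [← Finset.piecewise_eq_of_notMem s y x hi, Function.update_eq_self]
        _ ≤ f (Function.update (s.piecewise y x) i (y i)) := hf i _ (hxy i)
        _ = f ((insert i s).piecewise y x) := by rw [Finset.piecewise_insert]
  simpa using key Finset.univ

theorem IsUpperSet.monotone_indicator_one {β : Type*} [Preorder β] {B : Set β}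
    (hB : IsUpperSet B) : Monotone (B.indicator (1 : β → ℝ)) := by
  intro x y hxy
  by_cases hx : x ∈ B
  · simp [hx, hB hxy hx]
  · simp [hx, Set.indicator_nonneg]

theorem ProbabilityTheory.map_cond_preimage {Ω β : Type*} [MeasurableSpace Ω] [MeasurableSpace β]
    (μ : Measure Ω) {X : Ω → β} (hX : Measurable X) {B : Set β} (hB : MeasurableSet B) :
    (μ[|X ⁻¹' B]).map X = (μ.map X)[|B] := by
  rw [ProbabilityTheory.cond, ProbabilityTheory.cond, Measure.map_smul,
    ← Measure.restrict_map hX hB, Measure.map_apply hX hB]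

theorem Measurable.integrable_of_forall_norm_le {β : Type*} [MeasurableSpace β]
    {μ : Measure β} [IsFiniteMeasure μ] {h : β → ℝ} (hm : Measurable h) {C : ℝ}
    (hC : ∀ x, ‖h x‖ ≤ C) : Integrable h μ :=
  .of_bound hm.aestronglyMeasurable C (.of_forall hC)

theorem Monovary.integral_mul_integral_le_integral_mul {α : Type*} [MeasurableSpace α]
    {μ : Measure α} [IsProbabilityMeasure μ] {F G : α → ℝ} (hmono : Monovary F G)
    (hF : Integrable F μ) (hG : Integrable G μ) (hFG : Integrable (fun x => F x * G x) μ) :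
    (∫ x, F x ∂μ) * (∫ x, G x ∂μ) ≤ ∫ x, F x * G x ∂μ := by
  have hdiag : Integrable (fun p : α × α => F p.1 * G p.1 + F p.2 * G p.2) (μ.prod μ) :=
    (hFG.comp_fst μ).add (hFG.comp_snd μ)
  have hcross : Integrable (fun p : α × α => F p.1 * G p.2 + G p.1 * F p.2) (μ.prod μ) :=
    (hF.mul_prod hG).add (hG.mul_prod hF)
  have hnonneg : 0 ≤ ∫ p : α × α, (F p.2 - F p.1) * (G p.2 - G p.1) ∂μ.prod μ :=
    integral_nonneg fun p => hmono.sub_mul_sub_nonneg p.1 p.2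
  have hexpand : ∫ p : α × α, (F p.2 - F p.1) * (G p.2 - G p.1) ∂μ.prod μ =
      2 * ∫ x, F x * G x ∂μ - 2 * ((∫ x, F x ∂μ) * ∫ x, G x ∂μ) := by
    calc _ = ∫ p : α × α, (F p.1 * G p.1 + F p.2 * G p.2 - (F p.1 * G p.2 + G p.1 * F p.2))
          ∂μ.prod μ := by congr 1; ext; ring
      _ = _ := by
        rw [integral_sub hdiag hcross, integral_add (hFG.comp_fst μ) (hFG.comp_snd μ),
          integral_add (hF.mul_prod hG) (hG.mul_prod hF),
          integral_fun_fst (fun x => F x * G x), integral_fun_snd (fun x => F x * G x),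
          integral_prod_mul, integral_prod_mul]
        simp only [probReal_univ, smul_eq_mul, one_mul]
        ring
  linarith

section FinCons

variable {α : Type*} [MeasurableSpace α] {n : ℕ}

theorem measurePreserving_fin_cons (μ : Fin (n + 1) → Measure α) [∀ i, SigmaFinite (μ i)] :
    MeasurePreserving (fun p : α × (Fin n → α) => (Fin.cons p.1 p.2 : Fin (n + 1) → α))
      ((μ 0).prod (Measure.pi fun i => μ i.succ)) (Measure.pi μ) := by
  convert (measurePreserving_piFinSuccAbove μ 0).symm using 2
  · simp only [MeasurableEquiv.piFinSuccAbove_symm_apply, Fin.insertNthEquiv_zero]; rfl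
  · simp

theorem measurableEmbedding_fin_cons :
    MeasurableEmbedding (fun p : α × (Fin n → α) => (Fin.cons p.1 p.2 : Fin (n + 1) → α)) := by
  convert (MeasurableEquiv.piFinSuccAbove (fun _ => α) 0).symm.measurableEmbedding
  simp only [MeasurableEquiv.piFinSuccAbove_symm_apply, Fin.insertNthEquiv_zero]; rfl

theorem measurable_fin_cons (a : α) :
    Measurable fun y : Fin n → α => (Fin.cons a y : Fin (n + 1) → α) :=
  measurableEmbedding_fin_cons.measurable.comp measurable_prodMk_left

theorem integral_pi_fin_succ (μ : Fin (n + 1) → Measure α) [∀ i, SigmaFinite (μ i)]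
    {h : (Fin (n + 1) → α) → ℝ} (hh : Integrable h (Measure.pi μ)) :
    ∫ x, h x ∂Measure.pi μ =
      ∫ a, ∫ y, h (Fin.cons a y) ∂Measure.pi (fun i => μ i.succ) ∂μ 0 := by
  rw [← (measurePreserving_fin_cons μ).integral_comp measurableEmbedding_fin_cons]
  exact integral_prod _ <|
    ((measurePreserving_fin_cons μ).integrable_comp_emb measurableEmbedding_fin_cons).2 hh

variable (ν : Measure (Fin n → α)) {h : (Fin (n + 1) → α) → ℝ}

theorem measurable_integral_fin_cons [SFinite ν] (hh : Measurable h) :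
    Measurable fun a => ∫ y, h (Fin.cons a y) ∂ν :=
  (hh.comp measurableEmbedding_fin_cons.measurable).stronglyMeasurable
    |>.integral_prod_right'.measurable

theorem norm_integral_fin_cons_le [IsProbabilityMeasure ν] {C : ℝ} (hC : ∀ x, ‖h x‖ ≤ C)
    (a : α) : ‖∫ y, h (Fin.cons a y) ∂ν‖ ≤ C := by
  simpa using norm_integral_le_of_norm_le_const (μ := ν) (.of_forall fun y => hC (Fin.cons a y))

theorem integrable_integral_fin_cons [IsProbabilityMeasure ν] (μ₀ : Measure α)
    [IsFiniteMeasure μ₀] (hh : Measurable h) {C : ℝ} (hC : ∀ x, ‖h x‖ ≤ C) :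
    Integrable (fun a => ∫ y, h (Fin.cons a y) ∂ν) μ₀ :=
  (measurable_integral_fin_cons ν hh).integrable_of_forall_norm_le
    (norm_integral_fin_cons_le ν hC)

theorem monotone_integral_fin_cons [Preorder α] [IsFiniteMeasure ν] (hh : Monotone h)
    (hhm : Measurable h) {C : ℝ} (hC : ∀ x, ‖h x‖ ≤ C) :
    Monotone fun a => ∫ y, h (Fin.cons a y) ∂ν := fun a b hab =>
  integral_mono ((hhm.comp (measurable_fin_cons a)).integrable_of_forall_norm_le fun _ => hC _)
    ((hhm.comp (measurable_fin_cons b)).integrable_of_forall_norm_le fun _ => hC _)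
    fun _ => hh (Fin.cons_le_cons.2 ⟨hab, le_rfl⟩)

end FinCons

section Harris

variable {α : Type*} [LinearOrder α] [MeasurableSpace α] {n : ℕ}
  (μ : Fin n → Measure α) [∀ i, IsProbabilityMeasure (μ i)]

theorem Monotone.integral_mul_integral_le_integral_mul_pi {f g : (Fin n → α) → ℝ}
    (hf : Monotone f) (hg : Monotone g) (hfm : Measurable f) (hgm : Measurable g) {Cf Cg : ℝ}
    (hfC : ∀ x, ‖f x‖ ≤ Cf) (hgC : ∀ x, ‖g x‖ ≤ Cg) :
    (∫ x, f x ∂Measure.pi μ) * (∫ x, g x ∂Measure.pi μ) ≤ ∫ x, f x * g x ∂Measure.pi μ := by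
  induction n with
  | zero => simp [integral_unique]
  | succ n ih =>
    set ν := Measure.pi fun i : Fin n => μ i.succ
    set F := fun a => ∫ y, f (Fin.cons a y) ∂ν
    set G := fun a => ∫ y, g (Fin.cons a y) ∂ν
    have hfgC x : ‖f x * g x‖ ≤ Cf * Cg := norm_mul_le_of_le (hfC x) (hgC x)
    have hsection (a : α) : F a * G a ≤ ∫ y, f (Fin.cons a y) * g (Fin.cons a y) ∂ν :=
      ih (fun i => μ i.succ) (hf.comp fun _ _ hyz => Fin.cons_le_cons.2 ⟨le_rfl, hyz⟩)
        (hg.comp fun _ _ hyz => Fin.cons_le_cons.2 ⟨le_rfl, hyz⟩)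
        (hfm.comp (measurable_fin_cons a)) (hgm.comp (measurable_fin_cons a))
        (fun _ => hfC _) (fun _ => hgC _)
    have hFG : Integrable (fun a => F a * G a) (μ 0) :=
      ((measurable_integral_fin_cons ν hfm).mul (measurable_integral_fin_cons ν hgm))
        |>.integrable_of_forall_norm_le fun a =>
          norm_mul_le_of_le (norm_integral_fin_cons_le ν hfC a) (norm_integral_fin_cons_le ν hgC a)
    calc (∫ x, f x ∂Measure.pi μ) * (∫ x, g x ∂Measure.pi μ)
        = (∫ a, F a ∂μ 0) * (∫ a, G a ∂μ 0) := by
          rw [integral_pi_fin_succ μ (hfm.integrable_of_forall_norm_le hfC),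
            integral_pi_fin_succ μ (hgm.integrable_of_forall_norm_le hgC)]
      _ ≤ ∫ a, F a * G a ∂μ 0 :=
          ((monotone_integral_fin_cons ν hf hfm hfC).monovary
            (monotone_integral_fin_cons ν hg hgm hgC)).integral_mul_integral_le_integral_mul
            (integrable_integral_fin_cons ν _ hfm hfC)
            (integrable_integral_fin_cons ν _ hgm hgC) hFG
      _ ≤ ∫ a, ∫ y, f (Fin.cons a y) * g (Fin.cons a y) ∂ν ∂μ 0 :=
          integral_mono hFG (integrable_integral_fin_cons ν _ (hfm.mul hgm) hfgC) hsection
      _ = ∫ x, f x * g x ∂Measure.pi μ :=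
          (integral_pi_fin_succ μ ((hfm.mul hgm).integrable_of_forall_norm_le hfgC)).symm

theorem Monotone.integral_le_integral_cond_pi {f : (Fin n → α) → ℝ} (hf : Monotone f)
    (hfm : Measurable f) {C : ℝ} (hfC : ∀ x, ‖f x‖ ≤ C) {B : Set (Fin n → α)}
    (hB : IsUpperSet B) (hBm : MeasurableSet B) (hB₀ : Measure.pi μ B ≠ 0) :
    ∫ x, f x ∂Measure.pi μ ≤ ∫ x, f x ∂(Measure.pi μ)[|B] := by
  have hHarris := hf.integral_mul_integral_le_integral_mul_pi μ hB.monotone_indicator_one hfm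
    (measurable_const.indicator hBm) hfC (Cg := 1) fun _ =>
      (norm_indicator_le_norm_self _ _).trans_eq norm_one
  have hpos : 0 < (Measure.pi μ).real B := ENNReal.toReal_pos hB₀ (measure_ne_top _ _)
  have hind x : f x * B.indicator 1 x = B.indicator f x := by
    by_cases hx : x ∈ B <;> simp [hx]
  simp only [hind, integral_indicator_one hBm] at hHarris
  rw [ProbabilityTheory.cond, integral_smul_measure, ← integral_indicator hBm,
    ENNReal.toReal_inv, smul_eq_mul, ← measureReal_def, le_inv_mul_iff₀ hpos, mul_comm]
  exact hHarris

end Harris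

def partialSumsAbove (r : ℝ) (N : ℕ) : Set (Fin N → ℝ) :=
  {x | ∀ j, 1 ≤ j → ∀ hj : j ≤ N, (j : ℝ) * r ≤ ∑ i : Fin j, x (Fin.castLE hj i)}

theorem isUpperSet_partialSumsAbove (r : ℝ) (N : ℕ) : IsUpperSet (partialSumsAbove r N) :=
  fun _ _ hxy hx j h1 hj => (hx j h1 hj).trans (Finset.sum_le_sum fun _ _ => hxy _)

theorem measurableSet_partialSumsAbove (r : ℝ) (N : ℕ) :
    MeasurableSet (partialSumsAbove r N) := by
  simp only [partialSumsAbove, Set.ofPred_forall]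
  exact .iInter fun _ => .iInter fun _ => .iInter fun _ =>
    measurableSet_le measurable_const (by fun_prop)

theorem setOf_partialSums_eq_preimage {Ω : Type*} (W : ℕ → Ω → ℝ) (r : ℝ) (N : ℕ) :
    {ω | ∀ j, 1 ≤ j → j ≤ N → (j : ℝ) * r ≤ ∑ i ∈ Finset.range j, W i ω} =
      (fun ω (i : Fin N) => W i ω) ⁻¹' partialSumsAbove r N := by
  ext ω
  simp [partialSumsAbove, Fin.sum_univ_eq_sum_range (fun i => W i ω)]

theorem stmt16_general
    {Ω : Type*} [MeasureSpace Ω] [IsProbabilityMeasure (ℙ : Measure Ω)]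
    (W : ℕ → Ω → ℝ) (hWmeas : ∀ n, Measurable (W n))
    (hindep : iIndepFun W ℙ)
    (r : ℝ) (N : ℕ)
    (hpos : 0 < ℙ {ω | ∀ j, 1 ≤ j → j ≤ N → (j : ℝ) * r ≤ ∑ i ∈ Finset.range j, W i ω})
    (f : (Fin N → ℝ) → ℝ) (hfmeas : Measurable f)
    (hfbdd : ∃ C : ℝ, ∀ x, |f x| ≤ C)
    (hfmono : ∀ (i : Fin N) (x : Fin N → ℝ),
      Monotone fun t : ℝ => f (Function.update x i t)) :
    ∫ ω, f (fun i : Fin N => W i ω) ∂ℙ ≤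
      ∫ ω, f (fun i : Fin N => W i ω)
        ∂(ℙ[|{ω | ∀ j, 1 ≤ j → j ≤ N → (j : ℝ) * r ≤ ∑ i ∈ Finset.range j, W i ω}]) := by
  obtain ⟨C, hC⟩ := hfbdd
  set X : Ω → Fin N → ℝ := fun ω i => W i ω
  have hX : Measurable X := measurable_pi_lambda _ fun i => hWmeas i
  have hlaw : Measure.map X ℙ = Measure.pi fun i : Fin N => Measure.map (W i) ℙ :=
    (iIndepFun_iff_map_fun_eq_pi_map (f := fun i : Fin N => W i)
      fun i => (hWmeas i).aemeasurable).1 (hindep.precomp Fin.val_injective)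
  have (i : Fin N) := Measure.isProbabilityMeasure_map (μ := ℙ) (hWmeas i).aemeasurable
  have hB := measurableSet_partialSumsAbove r N
  rw [setOf_partialSums_eq_preimage] at hpos ⊢
  rw [← Measure.map_apply hX hB, hlaw] at hpos
  calc ∫ ω, f (X ω) ∂ℙ = ∫ x, f x ∂(Measure.map X ℙ) :=
        (integral_map hX.aemeasurable hfmeas.aestronglyMeasurable).symm
    _ ≤ ∫ x, f x ∂(Measure.map X ℙ)[|partialSumsAbove r N] := by
        rw [hlaw]
        exact (monotone_of_monotone_update hfmono).integral_le_integral_cond_pi _ hfmeas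
          (fun x => (norm_eq_abs _).trans_le (hC x)) (isUpperSet_partialSumsAbove r N) hB
          hpos.ne'
    _ = ∫ ω, f (X ω) ∂ℙ[|X ⁻¹' partialSumsAbove r N] := by
        rw [← map_cond_preimage ℙ hX hB,
          integral_map hX.aemeasurable hfmeas.aestronglyMeasurable]

theorem stmt16
    {Ω : Type*} [MeasureSpace Ω] [IsProbabilityMeasure (ℙ : Measure Ω)]
    (W : ℕ → Ω → ℝ) (hWmeas : ∀ n, Measurable (W n))
    (hlaw : ∀ n, Measure.map (W n) ℙ = Measure.map (W 0) ℙ)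
    (hindep : iIndepFun W ℙ)
    (r : ℝ) (N : ℕ) (hN : 1 ≤ N)
    (hpos : 0 < ℙ {ω | ∀ j, 1 ≤ j → j ≤ N → (j : ℝ) * r ≤ ∑ i ∈ Finset.range j, W i ω})
    (f : (Fin N → ℝ) → ℝ) (hfmeas : Measurable f)
    (hfbdd : ∃ C : ℝ, ∀ x, |f x| ≤ C)
    (hfmono : ∀ (i : Fin N) (x : Fin N → ℝ),
      Monotone fun t : ℝ => f (Function.update x i t)) :
    ∫ ω, f (fun i : Fin N => W i ω) ∂ℙ ≤
      ∫ ω, f (fun i : Fin N => W i ω)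
        ∂(ℙ[|{ω | ∀ j, 1 ≤ j → j ≤ N → (j : ℝ) * r ≤ ∑ i ∈ Finset.range j, W i ω}]) :=
  stmt16_general W hWmeas hindep r N hpos f hfmeas hfbdd hfmono
end

section
/- Let $r_1 < \mu < r_2$ with $P((-\infty,r_1))>0$ and $P([r_2,\infty))>0$, and define $Z^N_n$ as in the context. For fixed $N\ge 1$ and any $M\ge 1$ with $P\big(\bigcup_{n=1}^M \{Z^N_{2n}=-1\}\big)>0$, letting $b_N = P\big(Z^N_1\in\{1,-11\}\big)$, one has $P\Big(\bigcap_{n=1}^{2M}\{Z^N_n\in\{0,-1\}\}\,\Big|\,\bigcup_{n=1}^M\{Z^N_{2n}=-1\}\Big) \ge (1-b_N)^{2M}$. -/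
/-!
All events involved are decreasing functions of the first `K = (2M+1)N` steps, whose joint law is
the product measure `P^K` on `ℝ^K`. Product probability measures on `ℝ^K` are associated
(Harris' inequality, obtained by induction on `K` from Chebyshev's integral inequality), so
decreasing events are positively correlated. Hence, with `A_n = {Z_n ∈ {0, -1}}` and
`B = ⋃_{n ≤ M} {Z_{2n} = -1}`, we get `P(B ∩ ⋂ A_n) ≥ P(B) P(⋂ A_n)` and
`P(⋂ A_n) ≥ ∏ P(A_n) = (1 - b_N)^{2M}`, the blocks being identically distributed.
-/

open MeasureTheory ProbabilityTheory Filter Real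

open Classical in
/-- The indicator `Z^N_n` of the behaviour of the `n`-th block of length-`N` increments:
`1` if the block max is `≥ N r₂` and the block min is `≥ N r₁`, `-1` if the max is
`< N r₂` and the min is `< N r₁`, `-11` if the max is `≥ N r₂` and the min is `< N r₁`,
and `0` otherwise. -/
noncomputable def ZInd {Ω : Type*} (W : ℕ → Ω → ℝ) (r₁ r₂ : ℝ) (N n : ℕ) (ω : Ω) : ℤ :=
  if ∃ j < N, (N : ℝ) * r₂ ≤ seg W ((n - 1) * N + j) (n * N + j) ω then
    (if ∀ j < N, (N : ℝ) * r₁ ≤ seg W ((n - 1) * N + j) (n * N + j) ω then 1 else -11)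
  else
    (if ∀ j < N, (N : ℝ) * r₁ ≤ seg W ((n - 1) * N + j) (n * N + j) ω then 0 else -1)

section Association

variable {α β : Type*} [MeasurableSpace α] [MeasurableSpace β]

/-- Association in the sense of Esary–Proschan–Walkup. For `[0, 1]`-valued functions, testing
antitone ones is equivalent to testing monotone ones (replace `f` by `1 - f`). -/
def IsAssociated [Preorder α] (μ : Measure α) : Prop :=
  ∀ ⦃f g : α → ℝ⦄, Measurable f → Measurable g → Antitone f → Antitone g →
    (∀ x, f x ∈ unitInterval) → (∀ x, g x ∈ unitInterval) →
    (∫ x, f x ∂μ) * (∫ x, g x ∂μ) ≤ ∫ x, f x * g x ∂μ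

lemma integrable_of_mem_unitInterval {μ : Measure α} [IsFiniteMeasure μ] {f : α → ℝ}
    (hf : Measurable f) (h01 : ∀ x, f x ∈ unitInterval) : Integrable f μ :=
  .of_bound hf.aestronglyMeasurable 1 <| .of_forall fun x => by
    rw [Real.norm_of_nonneg (h01 x).1]; exact (h01 x).2

lemma integral_mem_unitInterval {μ : Measure α} [IsProbabilityMeasure μ] {f : α → ℝ}
    (hf : Measurable f) (h01 : ∀ x, f x ∈ unitInterval) : ∫ x, f x ∂μ ∈ unitInterval :=
  ⟨integral_nonneg fun x => (h01 x).1, by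
    simpa using integral_mono (integrable_of_mem_unitInterval hf h01) (integrable_const (μ := μ) 1)
      fun x => (h01 x).2⟩

theorem isAssociated_of_linearOrder [LinearOrder α] (μ : Measure α) [IsProbabilityMeasure μ] :
    IsAssociated μ := by
  intro f g hf hg hfa hga hf01 hg01
  have similarly_ordered : ∀ p : α × α, 0 ≤ (f p.1 - f p.2) * (g p.1 - g p.2) := by
    rintro ⟨x, y⟩
    rcases le_total x y with h | h
    · exact mul_nonneg (sub_nonneg.2 (hfa h)) (sub_nonneg.2 (hga h))
    · exact mul_nonneg_of_nonpos_of_nonpos (sub_nonpos.2 (hfa h)) (sub_nonpos.2 (hga h))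
  have hint : ∀ {u v : α × α → α}, Measurable u → Measurable v →
      Integrable (fun p => f (u p) * g (v p)) (μ.prod μ) := fun hu hv =>
    integrable_of_mem_unitInterval ((hf.comp hu).mul (hg.comp hv))
      fun p => unitInterval.mul_mem (hf01 _) (hg01 _)
  have hswap : ∫ p, f p.2 * g p.1 ∂(μ.prod μ) = (∫ x, f x ∂μ) * (∫ x, g x ∂μ) := by
    rw [mul_comm, ← integral_prod_mul g f]
    simp only [mul_comm]
  have expand : ∫ p, (f p.1 - f p.2) * (g p.1 - g p.2) ∂(μ.prod μ)
      = 2 * ((∫ x, f x * g x ∂μ) - (∫ x, f x ∂μ) * (∫ x, g x ∂μ)) := by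
    simp only [sub_mul, mul_sub]
    rw [integral_sub (f := fun p : α × α => f p.1 * g p.1 - f p.2 * g p.1)
        (g := fun p : α × α => f p.1 * g p.2 - f p.2 * g p.2)
        ((hint measurable_fst measurable_fst).sub (hint measurable_snd measurable_fst))
        ((hint measurable_fst measurable_snd).sub (hint measurable_snd measurable_snd)),
      integral_sub (hint measurable_fst measurable_fst) (hint measurable_snd measurable_fst),
      integral_sub (hint measurable_fst measurable_snd) (hint measurable_snd measurable_snd), hswap,
      integral_prod_mul f g, integral_fun_fst (fun x => f x * g x),
      integral_fun_snd (fun x => f x * g x), probReal_univ, one_smul]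
    ring
  nlinarith [integral_nonneg (μ := μ.prod μ) (f := fun p => (f p.1 - f p.2) * (g p.1 - g p.2))
    similarly_ordered]

theorem isAssociated_of_subsingleton [Preorder α] [Subsingleton α] (μ : Measure α)
    [IsProbabilityMeasure μ] : IsAssociated μ := by
  obtain ⟨x₀⟩ := nonempty_of_isProbabilityMeasure μ
  have hconst : ∀ h : α → ℝ, ∫ x, h x ∂μ = h x₀ := fun h => by
    rw [show h = fun _ => h x₀ from funext fun x => congrArg h (Subsingleton.elim x x₀)]
    simp
  intro f g _ _ _ _ _ _
  rw [hconst f, hconst g, hconst fun x => f x * g x]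

theorem IsAssociated.prod [Preorder α] [Preorder β] {μ : Measure α} {ν : Measure β}
    [IsProbabilityMeasure μ] [IsProbabilityMeasure ν] (hμ : IsAssociated μ)
    (hν : IsAssociated ν) : IsAssociated (μ.prod ν) := by
  intro f g hf hg hfa hga hf01 hg01
  have hfg01 : ∀ p, f p * g p ∈ unitInterval := fun p => unitInterval.mul_mem (hf01 p) (hg01 p)
  have hfib : ∀ {h : α × β → ℝ}, Measurable h → (∀ p, h p ∈ unitInterval) →
      Measurable (fun a => ∫ y, h (a, y) ∂ν) ∧ ∀ a, ∫ y, h (a, y) ∂ν ∈ unitInterval :=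
    fun hh h01 => ⟨(hh.stronglyMeasurable.integral_prod_right' (ν := ν)).measurable,
      fun a => integral_mem_unitInterval (hh.comp measurable_prodMk_left) fun y => h01 _⟩
  have hfib_anti : ∀ {h : α × β → ℝ}, Measurable h → (∀ p, h p ∈ unitInterval) → Antitone h →
      Antitone (fun a => ∫ y, h (a, y) ∂ν) := fun hh h01 ha a a' haa' =>
    integral_mono (integrable_of_mem_unitInterval (hh.comp measurable_prodMk_left) fun y => h01 _)
      (integrable_of_mem_unitInterval (hh.comp measurable_prodMk_left) fun y => h01 _)
      fun y => ha (Prod.mk_le_mk.2 ⟨haa', le_rfl⟩)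
  obtain ⟨hF, hF01⟩ := hfib hf hf01
  obtain ⟨hG, hG01⟩ := hfib hg hg01
  obtain ⟨hFG, hFG01⟩ := hfib (hf.mul hg) hfg01
  have hfiber : ∀ a, (∫ y, f (a, y) ∂ν) * (∫ y, g (a, y) ∂ν) ≤ ∫ y, f (a, y) * g (a, y) ∂ν :=
    fun a => hν (hf.comp measurable_prodMk_left) (hg.comp measurable_prodMk_left)
      (fun y y' h => hfa (Prod.mk_le_mk.2 ⟨le_rfl, h⟩))
      (fun y y' h => hga (Prod.mk_le_mk.2 ⟨le_rfl, h⟩)) (fun y => hf01 _) (fun y => hg01 _)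
  rw [integral_prod f (integrable_of_mem_unitInterval hf hf01),
    integral_prod g (integrable_of_mem_unitInterval hg hg01),
    integral_prod (fun p => f p * g p) (integrable_of_mem_unitInterval (hf.mul hg) hfg01)]
  calc _ ≤ ∫ a, (∫ y, f (a, y) ∂ν) * (∫ y, g (a, y) ∂ν) ∂μ :=
        hμ hF hG (hfib_anti hf hf01 hfa) (hfib_anti hg hg01 hga) hF01 hG01
    _ ≤ _ := integral_mono
        (integrable_of_mem_unitInterval (hF.mul hG) fun a => unitInterval.mul_mem (hF01 a) (hG01 a))
        (integrable_of_mem_unitInterval hFG hFG01) hfiber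

theorem IsAssociated.map [Preorder α] [Preorder β] {μ : Measure α} (hμ : IsAssociated μ)
    {e : α → β} (he : Measurable e) (he_mono : Monotone e) : IsAssociated (μ.map e) := by
  intro f g hf hg hfa hga hf01 hg01
  rw [integral_map he.aemeasurable hf.aestronglyMeasurable,
    integral_map he.aemeasurable hg.aestronglyMeasurable,
    integral_map (f := fun x => f x * g x) he.aemeasurable (hf.mul hg).aestronglyMeasurable]
  exact hμ (hf.comp he) (hg.comp he) (hfa.comp_monotone he_mono) (hga.comp_monotone he_mono)
    (fun x => hf01 _) (fun x => hg01 _)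

theorem isAssociated_pi [LinearOrder α] :
    ∀ {k : ℕ} (μ : Fin k → Measure α) [∀ i, IsProbabilityMeasure (μ i)],
      IsAssociated (Measure.pi μ)
  | 0, μ, _ => isAssociated_of_subsingleton _
  | k + 1, μ, _ => by
    rw [← (measurePreserving_piFinSuccAbove μ 0).symm.map_eq]
    refine ((isAssociated_of_linearOrder (μ 0)).prod (isAssociated_pi fun j => μ j.succ)).map
      (MeasurableEquiv.measurable _) ?_
    rintro ⟨a, x⟩ ⟨b, y⟩ h
    simpa [MeasurableEquiv.piFinSuccAbove_symm_apply, Fin.insertNthEquiv, Fin.insertNth_zero']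
      using Fin.cons_le_cons.2 h

theorem IsAssociated.measure_mul_measure_le_inter [Preorder α] {μ : Measure α}
    [IsProbabilityMeasure μ] (hμ : IsAssociated μ) {s t : Set α} (hs : MeasurableSet s)
    (ht : MeasurableSet t) (hs_lower : IsLowerSet s) (ht_lower : IsLowerSet t) :
    μ s * μ t ≤ μ (s ∩ t) := by
  have hind : ∀ u : Set α, IsLowerSet u → Antitone (u.indicator (1 : α → ℝ)) ∧
      ∀ x, u.indicator (1 : α → ℝ) x ∈ unitInterval := fun u hu => by
    refine ⟨fun x y hxy => ?_, fun x => ?_⟩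
    · by_cases hy : y ∈ u
      · simp [hy, hu hxy hy]
      · simp only [Set.indicator_of_notMem hy]
        exact Set.indicator_nonneg (fun _ _ => zero_le_one) x
    · by_cases hx : x ∈ u <;> simp [hx]
  have key := hμ (measurable_one.indicator hs) (measurable_one.indicator ht)
    (hind s hs_lower).1 (hind t ht_lower).1 (hind s hs_lower).2 (hind t ht_lower).2
  have hinter : ∫ x, s.indicator (1 : α → ℝ) x * t.indicator 1 x ∂μ = μ.real (s ∩ t) := by
    rw [← integral_indicator_one (hs.inter ht), Set.inter_indicator_one]; rfl
  rw [integral_indicator_one hs, integral_indicator_one ht, hinter] at key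
  rw [← ENNReal.toReal_le_toReal (by finiteness) (by finiteness), ENNReal.toReal_mul]
  exact key

theorem IsAssociated.prod_measure_le_biInter [Preorder α] {μ : Measure α}
    [IsProbabilityMeasure μ] (hμ : IsAssociated μ) {ι : Type*} (S : Finset ι) {s : ι → Set α}
    (hs : ∀ i ∈ S, MeasurableSet (s i)) (hs_lower : ∀ i ∈ S, IsLowerSet (s i)) :
    ∏ i ∈ S, μ (s i) ≤ μ (⋂ i ∈ S, s i) := by
  classical
  induction S using Finset.induction_on with
  | empty => simp
  | insert a S ha ih =>
    simp only [Finset.mem_insert, forall_eq_or_imp] at hs hs_lower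
    rw [Finset.prod_insert ha, Finset.set_biInter_insert]
    calc μ (s a) * ∏ i ∈ S, μ (s i) ≤ μ (s a) * μ (⋂ i ∈ S, s i) :=
          mul_le_mul_right (ih hs.2 hs_lower.2) _
      _ ≤ μ (s a ∩ ⋂ i ∈ S, s i) :=
          hμ.measure_mul_measure_le_inter hs.1 (.biInter S.countable_toSet hs.2) hs_lower.1
            (isLowerSet_iInter₂ hs_lower.2)

theorem IsAssociated.le_cond_preimage {Ω : Type*} [MeasurableSpace Ω] [Preorder α]
    {μ : Measure Ω} [IsProbabilityMeasure μ] {X : Ω → α} (hX : Measurable X)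
    (hassoc : IsAssociated (μ.map X)) {s t : Set α} (hs : MeasurableSet s)
    (ht : MeasurableSet t) (hs_lower : IsLowerSet s) (ht_lower : IsLowerSet t)
    (hpos : μ (X ⁻¹' s) ≠ 0) : μ (X ⁻¹' t) ≤ μ[|X ⁻¹' s] (X ⁻¹' t) := by
  have := Measure.isProbabilityMeasure_map (μ := μ) hX.aemeasurable
  have key := hassoc.measure_mul_measure_le_inter hs ht hs_lower ht_lower
  rw [Measure.map_apply hX hs, Measure.map_apply hX ht, Measure.map_apply hX (hs.inter ht),
    Set.preimage_inter] at key
  rw [cond_apply (hX hs)]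
  calc μ (X ⁻¹' t) = (μ (X ⁻¹' s))⁻¹ * (μ (X ⁻¹' s) * μ (X ⁻¹' t)) := by
        rw [← mul_assoc, ENNReal.inv_mul_cancel hpos (by finiteness), one_mul]
    _ ≤ _ := mul_le_mul_right key _

theorem IsAssociated.prod_measure_preimage_le_cond {Ω : Type*} [MeasurableSpace Ω] [Preorder α]
    {μ : Measure Ω} [IsProbabilityMeasure μ] {X : Ω → α} (hX : Measurable X)
    (hassoc : IsAssociated (μ.map X)) {ι : Type*} (S : Finset ι) {s : ι → Set α} {t : Set α}
    (hs : ∀ i ∈ S, MeasurableSet (s i)) (hs_lower : ∀ i ∈ S, IsLowerSet (s i))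
    (ht : MeasurableSet t) (ht_lower : IsLowerSet t) (hpos : μ (X ⁻¹' t) ≠ 0) :
    ∏ i ∈ S, μ (X ⁻¹' s i) ≤ μ[|X ⁻¹' t] (X ⁻¹' ⋂ i ∈ S, s i) := by
  have := Measure.isProbabilityMeasure_map (μ := μ) hX.aemeasurable
  have hS : MeasurableSet (⋂ i ∈ S, s i) := .biInter S.countable_toSet hs
  calc ∏ i ∈ S, μ (X ⁻¹' s i) = ∏ i ∈ S, μ.map X (s i) :=
        Finset.prod_congr rfl fun i hi => (Measure.map_apply hX (hs i hi)).symm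
    _ ≤ μ.map X (⋂ i ∈ S, s i) := hassoc.prod_measure_le_biInter S hs hs_lower
    _ = μ (X ⁻¹' ⋂ i ∈ S, s i) := Measure.map_apply hX hS
    _ ≤ _ := hassoc.le_cond_preimage hX ht hS ht_lower (isLowerSet_iInter₂ hs_lower) hpos

end Association

section Blocks

variable {Ω Ω' : Type*}

lemma seg_shift (W : ℕ → Ω → ℝ) (a j k : ℕ) (ω : Ω) :
    seg (fun m => W (a + m)) j k ω = seg W (a + j) (a + k) ω := by
  simp only [seg, add_comm a]
  exact Finset.sum_Ico_add' (fun m => W m ω) j k a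

lemma seg_le_seg {W : ℕ → Ω → ℝ} {W' : ℕ → Ω' → ℝ} {ω : Ω} {ω' : Ω'}
    (h : ∀ m, W m ω ≤ W' m ω') (j k : ℕ) : seg W j k ω ≤ seg W' j k ω' :=
  Finset.sum_le_sum fun m _ => h m

lemma seg_congr {W : ℕ → Ω → ℝ} {W' : ℕ → Ω' → ℝ} {ω : Ω} {ω' : Ω'} {j k : ℕ}
    (h : ∀ m < k, W m ω = W' m ω') : seg W j k ω = seg W' j k ω' :=
  Finset.sum_congr rfl fun m hm => h m (Finset.mem_Ico.1 hm).2

lemma measurable_seg [MeasurableSpace Ω] {W : ℕ → Ω → ℝ} (hW : ∀ m, Measurable (W m))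
    (j k : ℕ) : Measurable (seg W j k) :=
  Finset.measurable_sum _ fun m _ => hW m

variable (W : ℕ → Ω → ℝ) (r₁ r₂ : ℝ) (N n : ℕ) (ω : Ω)

lemma ZInd_eq_zero_or_neg_one_iff :
    ZInd W r₁ r₂ N n ω = 0 ∨ ZInd W r₁ r₂ N n ω = -1 ↔
      ∀ j < N, seg W ((n - 1) * N + j) (n * N + j) ω < N * r₂ := by
  simp only [ZInd, ← not_le, ← not_exists_not, not_not, exists_prop]
  split_ifs <;> simp_all

lemma ZInd_eq_neg_one_iff :
    ZInd W r₁ r₂ N n ω = -1 ↔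
      (∀ j < N, seg W ((n - 1) * N + j) (n * N + j) ω < N * r₂) ∧
        ∃ j < N, seg W ((n - 1) * N + j) (n * N + j) ω < N * r₁ := by
  simp only [ZInd, ← not_le, ← not_exists_not, not_not, exists_prop]
  split_ifs <;> simp_all

lemma ZInd_eq_one_or_neg_eleven_iff :
    ZInd W r₁ r₂ N n ω = 1 ∨ ZInd W r₁ r₂ N n ω = -11 ↔
      ¬(ZInd W r₁ r₂ N n ω = 0 ∨ ZInd W r₁ r₂ N n ω = -1) := by
  simp only [ZInd]
  split_ifs <;> simp

lemma measurable_ZInd [MeasurableSpace Ω] {W : ℕ → Ω → ℝ} (hW : ∀ m, Measurable (W m)) :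
    Measurable (ZInd W r₁ r₂ N n) := by
  have hseg (c : ℝ) (j : ℕ) : Measurable fun ω => c ≤ seg W ((n - 1) * N + j) (n * N + j) ω :=
    measurableSet_setOfPred.1 (measurableSet_le measurable_const (measurable_seg hW _ _))
  have hmax : MeasurableSet {ω | ∃ j < N, N * r₂ ≤ seg W ((n - 1) * N + j) (n * N + j) ω} :=
    measurableSet_setOfPred.2 (.exists fun j => measurable_const.and (hseg _ j))
  have hmin : MeasurableSet {ω | ∀ j < N, N * r₁ ≤ seg W ((n - 1) * N + j) (n * N + j) ω} :=
    measurableSet_setOfPred.2 (.forall fun j => measurable_const.imp (hseg _ j))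
  exact Measurable.ite hmax (Measurable.ite hmin measurable_const measurable_const)
    (Measurable.ite hmin measurable_const measurable_const)

lemma ZInd_congr {W : ℕ → Ω → ℝ} {W' : ℕ → Ω' → ℝ} {ω : Ω} {ω' : Ω'}
    (h : ∀ m < n * N + N, W m ω = W' m ω') : ZInd W r₁ r₂ N n ω = ZInd W' r₁ r₂ N n ω' := by
  have hseg : ∀ j < N, seg W ((n - 1) * N + j) (n * N + j) ω
      = seg W' ((n - 1) * N + j) (n * N + j) ω' := fun j hj =>
    seg_congr fun m hm => h m (by omega)
  have hmax : (∃ j < N, N * r₂ ≤ seg W ((n - 1) * N + j) (n * N + j) ω) ↔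
      ∃ j < N, N * r₂ ≤ seg W' ((n - 1) * N + j) (n * N + j) ω' :=
    exists_congr fun j => and_congr_right fun hj => by rw [hseg j hj]
  have hmin : (∀ j < N, N * r₁ ≤ seg W ((n - 1) * N + j) (n * N + j) ω) ↔
      ∀ j < N, N * r₁ ≤ seg W' ((n - 1) * N + j) (n * N + j) ω' :=
    forall_congr' fun j => imp_congr_right fun hj => by rw [hseg j hj]
  simp only [ZInd, hmax, hmin]

lemma ZInd_succ :
    ZInd W r₁ r₂ N (n + 1) ω = ZInd (fun m => W (n * N + m)) r₁ r₂ N 1 ω := by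
  simp only [ZInd, seg_shift, Nat.add_sub_cancel, Nat.sub_self, zero_mul, zero_add, one_mul,
    add_mul, add_assoc]

end Blocks

section CanonicalSpace

variable {Ω : Type*}

/-- Makes `seg` and `ZInd` available on the canonical space `Fin K → ℝ`; the value `0` beyond `K`
is never read. -/
def zeroExtend (K m : ℕ) (x : Fin K → ℝ) : ℝ :=
  if h : m < K then x ⟨m, h⟩ else 0

lemma measurable_zeroExtend (K m : ℕ) : Measurable (zeroExtend K m) := by
  unfold zeroExtend
  split_ifs
  exacts [measurable_pi_apply _, measurable_const]

lemma monotone_zeroExtend (K m : ℕ) : Monotone (zeroExtend K m) := fun x y hxy => by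
  unfold zeroExtend
  split_ifs
  exacts [hxy _, le_rfl]

variable (K : ℕ) (r₁ r₂ : ℝ) (N n : ℕ)

lemma isLowerSet_preimage_ZInd_zero_neg_one :
    IsLowerSet (ZInd (zeroExtend K) r₁ r₂ N n ⁻¹' {0, -1}) := fun x y hyx hx => by
  have hle := seg_le_seg fun m => monotone_zeroExtend K m hyx
  have hx := (ZInd_eq_zero_or_neg_one_iff _ r₁ r₂ N n x).1 hx
  exact (ZInd_eq_zero_or_neg_one_iff _ r₁ r₂ N n y).2 fun j hj => (hle _ _).trans_lt (hx j hj)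

lemma isLowerSet_preimage_ZInd_neg_one : IsLowerSet (ZInd (zeroExtend K) r₁ r₂ N n ⁻¹' {-1}) :=
  fun x y hyx hx => by
    have hle := seg_le_seg fun m => monotone_zeroExtend K m hyx
    have hx := (ZInd_eq_neg_one_iff _ r₁ r₂ N n x).1 hx
    exact (ZInd_eq_neg_one_iff _ r₁ r₂ N n y).2 ⟨fun j hj => (hle _ _).trans_lt (hx.1 j hj),
      hx.2.imp fun j ⟨hj, h⟩ => ⟨hj, (hle _ _).trans_lt h⟩⟩

def window (W : ℕ → Ω → ℝ) (a K : ℕ) : Ω → Fin K → ℝ := fun ω i => W (a + i) ω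

lemma measurable_window [MeasurableSpace Ω] {W : ℕ → Ω → ℝ} (hW : ∀ m, Measurable (W m))
    (a K : ℕ) : Measurable (window W a K) :=
  measurable_pi_lambda _ fun _ => hW _

variable (W : ℕ → Ω → ℝ)

lemma zeroExtend_window {a m : ℕ} (hm : m < K) (ω : Ω) :
    zeroExtend K m (window W a K ω) = W (a + m) ω := by
  simp [zeroExtend, window, hm]

lemma ZInd_zeroExtend_comp_window (hK : n * N + N ≤ K) :
    ZInd (zeroExtend K) r₁ r₂ N n ∘ window W 0 K = ZInd W r₁ r₂ N n :=
  funext fun ω => ZInd_congr r₁ r₂ N n fun m hm => by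
    rw [zeroExtend_window K W (by omega), zero_add]

lemma ZInd_zeroExtend_comp_window_of_one_le (hn : 1 ≤ n) :
    ZInd (zeroExtend (2 * N)) r₁ r₂ N 1 ∘ window W ((n - 1) * N) (2 * N) = ZInd W r₁ r₂ N n := by
  obtain ⟨n, rfl⟩ := Nat.exists_eq_add_of_le' hn
  funext ω
  rw [Function.comp_apply, ZInd_succ W r₁ r₂ N n ω, Nat.add_sub_cancel]
  exact ZInd_congr r₁ r₂ N 1 fun m hm => zeroExtend_window _ W (by omega) ω

end CanonicalSpace

section IID

variable {Ω : Type*} [MeasureSpace Ω] {W : ℕ → Ω → ℝ} {P : Measure ℝ}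
  (hW : ∀ n, Measurable (W n)) (hlaw : ∀ n, (ℙ : Measure Ω).map (W n) = P)
  (hindep : iIndepFun W (ℙ : Measure Ω))
include hW hlaw hindep

lemma map_window_eq_pi (a K : ℕ) :
    (ℙ : Measure Ω).map (window W a K) = Measure.pi fun _ : Fin K => P := by
  have hinj : Function.Injective fun i : Fin K => a + i :=
    fun i j h => Fin.val_injective (Nat.add_left_cancel h)
  unfold window
  rw [(hindep.precomp hinj).map_fun_eq_pi_map fun i => (hW _).aemeasurable]
  simp [hlaw]

lemma isAssociated_map_window [IsProbabilityMeasure P] (a K : ℕ) :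
    IsAssociated ((ℙ : Measure Ω).map (window W a K)) := by
  rw [map_window_eq_pi hW hlaw hindep]
  exact isAssociated_pi _

lemma measure_preimage_ZInd_eq (r₁ r₂ : ℝ) (N : ℕ) {n : ℕ} (hn : 1 ≤ n) (S : Set ℤ) :
    ℙ (ZInd W r₁ r₂ N n ⁻¹' S) = ℙ (ZInd W r₁ r₂ N 1 ⁻¹' S) := by
  have hwindow : ∀ n, 1 ≤ n → ℙ (ZInd W r₁ r₂ N n ⁻¹' S) =
      (Measure.pi fun _ : Fin (2 * N) => P) (ZInd (zeroExtend (2 * N)) r₁ r₂ N 1 ⁻¹' S) :=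
    fun n hn => by
      rw [← map_window_eq_pi hW hlaw hindep ((n - 1) * N),
        Measure.map_apply (measurable_window hW _ _)
          (measurable_ZInd r₁ r₂ N 1 (measurable_zeroExtend _) .of_discrete),
        ← Set.preimage_comp, ZInd_zeroExtend_comp_window_of_one_le _ _ _ _ _ hn]
  rw [hwindow n hn, hwindow 1 le_rfl]

lemma measure_preimage_ZInd_zero_neg_one [IsProbabilityMeasure (ℙ : Measure Ω)] (r₁ r₂ : ℝ)
    (N : ℕ) {n : ℕ} (hn : 1 ≤ n) :
    ℙ (ZInd W r₁ r₂ N n ⁻¹' {0, -1}) =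
      1 - ℙ {ω | ZInd W r₁ r₂ N 1 ω = 1 ∨ ZInd W r₁ r₂ N 1 ω = -11} := by
  have hcompl : {ω | ZInd W r₁ r₂ N 1 ω = 1 ∨ ZInd W r₁ r₂ N 1 ω = -11} =
      (ZInd W r₁ r₂ N 1 ⁻¹' {0, -1})ᶜ := by
    ext ω
    exact ZInd_eq_one_or_neg_eleven_iff W r₁ r₂ N 1 ω
  rw [hcompl, prob_compl_eq_one_sub (measurable_ZInd r₁ r₂ N 1 hW .of_discrete),
    ENNReal.sub_sub_cancel ENNReal.one_ne_top prob_le_one]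
  exact measure_preimage_ZInd_eq hW hlaw hindep r₁ r₂ N hn {0, -1}

lemma prod_measure_ZInd_zero_neg_one_le_cond [IsProbabilityMeasure (ℙ : Measure Ω)]
    [IsProbabilityMeasure P] (r₁ r₂ : ℝ) (N K : ℕ) (S : Finset ℕ) {ι : Type*} (T : Finset ι)
    (m : ι → ℕ) (hS : ∀ n ∈ S, n * N + N ≤ K) (hT : ∀ i ∈ T, m i * N + N ≤ K)
    (hpos : ℙ (⋃ i ∈ T, ZInd W r₁ r₂ N (m i) ⁻¹' {-1}) ≠ 0) :
    ∏ n ∈ S, ℙ (ZInd W r₁ r₂ N n ⁻¹' {0, -1}) ≤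
      ℙ[|⋃ i ∈ T, ZInd W r₁ r₂ N (m i) ⁻¹' {-1}] (⋂ n ∈ S, ZInd W r₁ r₂ N n ⁻¹' {0, -1}) := by
  have hpre : ∀ n, n * N + N ≤ K → ∀ s : Set ℤ,
      window W 0 K ⁻¹' (ZInd (zeroExtend K) r₁ r₂ N n ⁻¹' s) = ZInd W r₁ r₂ N n ⁻¹' s :=
    fun n hn s => by rw [← Set.preimage_comp, ZInd_zeroExtend_comp_window K r₁ r₂ N n W hn]
  have hA : ⋂ n ∈ S, ZInd W r₁ r₂ N n ⁻¹' {0, -1} =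
      window W 0 K ⁻¹' ⋂ n ∈ S, ZInd (zeroExtend K) r₁ r₂ N n ⁻¹' {0, -1} := by
    simp only [Set.preimage_iInter₂]
    exact Set.iInter₂_congr fun n hn => (hpre n (hS n hn) _).symm
  have hB : ⋃ i ∈ T, ZInd W r₁ r₂ N (m i) ⁻¹' {-1} =
      window W 0 K ⁻¹' ⋃ i ∈ T, ZInd (zeroExtend K) r₁ r₂ N (m i) ⁻¹' {-1} := by
    simp only [Set.preimage_iUnion₂]
    exact Set.iUnion₂_congr fun i hi => (hpre (m i) (hT i hi) _).symm
  rw [hB] at hpos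
  rw [hA, hB]
  calc ∏ n ∈ S, ℙ (ZInd W r₁ r₂ N n ⁻¹' {0, -1})
      = ∏ n ∈ S, ℙ (window W 0 K ⁻¹' (ZInd (zeroExtend K) r₁ r₂ N n ⁻¹' {0, -1})) :=
        Finset.prod_congr rfl fun n hn => by rw [hpre n (hS n hn)]
    _ ≤ _ := (isAssociated_map_window hW hlaw hindep 0 K).prod_measure_preimage_le_cond
      (measurable_window hW 0 K) S
      (fun n _ => measurable_ZInd r₁ r₂ N n (measurable_zeroExtend K) .of_discrete)
      (fun n _ => isLowerSet_preimage_ZInd_zero_neg_one K r₁ r₂ N n)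
      (.biUnion T.countable_toSet fun i _ =>
        measurable_ZInd r₁ r₂ N (m i) (measurable_zeroExtend K) .of_discrete)
      (isLowerSet_iUnion₂ fun i _ => isLowerSet_preimage_ZInd_neg_one K r₁ r₂ N (m i)) hpos

end IID

lemma ENNReal.ofReal_one_sub_toReal_pow {b : ENNReal} (hb : b ≤ 1) (k : ℕ) :
    ENNReal.ofReal ((1 - b.toReal) ^ k) = (1 - b) ^ k := by
  rw [← ENNReal.toReal_one, ← ENNReal.toReal_sub_of_le hb ENNReal.one_ne_top,
    ← ENNReal.toReal_pow, ENNReal.ofReal_toReal (by finiteness)]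

theorem stmt17_general
    {Ω : Type*} [MeasureSpace Ω] [IsProbabilityMeasure (ℙ : Measure Ω)]
    (W : ℕ → Ω → ℝ) (hWmeas : ∀ n, Measurable (W n))
    (P : Measure ℝ) [IsProbabilityMeasure P]
    (hlaw : ∀ n, Measure.map (W n) ℙ = P)
    (hindep : iIndepFun W ℙ)
    (r₁ r₂ : ℝ)
    (N : ℕ) (M : ℕ)
    (hpos : 0 < ℙ (⋃ n ∈ Finset.Icc 1 M, {ω | ZInd W r₁ r₂ N (2 * n) ω = -1})) :
    ENNReal.ofReal
        ((1 - (ℙ {ω | ZInd W r₁ r₂ N 1 ω = 1 ∨ ZInd W r₁ r₂ N 1 ω = -11}).toReal) ^ (2 * M)) ≤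
      ℙ[|⋃ n ∈ Finset.Icc 1 M, {ω | ZInd W r₁ r₂ N (2 * n) ω = -1}]
        (⋂ n ∈ Finset.Icc 1 (2 * M),
          {ω | ZInd W r₁ r₂ N n ω = 0 ∨ ZInd W r₁ r₂ N n ω = -1}) := by
  have hfit : ∀ n ≤ 2 * M, n * N + N ≤ (2 * M + 1) * N := fun n hn => by
    simpa [add_mul] using Nat.mul_le_mul_right N hn
  calc _ = ∏ n ∈ Finset.Icc 1 (2 * M), ℙ (ZInd W r₁ r₂ N n ⁻¹' {0, -1}) := by
        rw [ENNReal.ofReal_one_sub_toReal_pow prob_le_one, Finset.prod_congr rfl fun n hn =>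
          measure_preimage_ZInd_zero_neg_one hWmeas hlaw hindep r₁ r₂ N (Finset.mem_Icc.1 hn).1,
          Finset.prod_const, Nat.card_Icc, Nat.add_sub_cancel]
    _ ≤ _ := prod_measure_ZInd_zero_neg_one_le_cond hWmeas hlaw hindep r₁ r₂ N _
        (Finset.Icc 1 (2 * M)) (Finset.Icc 1 M) (2 * ·)
        (fun n hn => hfit n (Finset.mem_Icc.1 hn).2)
        (fun n hn => hfit (2 * n) (by have := (Finset.mem_Icc.1 hn).2; omega)) hpos.ne'

theorem stmt17
    {Ω : Type*} [MeasureSpace Ω] [IsProbabilityMeasure (ℙ : Measure Ω)]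
    (W : ℕ → Ω → ℝ) (hWmeas : ∀ n, Measurable (W n))
    (P : Measure ℝ) [IsProbabilityMeasure P]
    (hlaw : ∀ n, Measure.map (W n) ℙ = P)
    (hindep : iIndepFun W ℙ)
    (μ : ℝ) (hμ : μ = ∫ x, x ∂P)
    (r₁ r₂ : ℝ) (hr₁ : r₁ < μ) (hr₂ : μ < r₂)
    (hP₁ : 0 < P (Set.Iio r₁)) (hP₂ : 0 < P (Set.Ici r₂))
    (N : ℕ) (hN : 1 ≤ N) (M : ℕ) (hM : 1 ≤ M)
    (hpos : 0 < ℙ (⋃ n ∈ Finset.Icc 1 M, {ω | ZInd W r₁ r₂ N (2 * n) ω = -1})) :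
    ENNReal.ofReal
        ((1 - (ℙ {ω | ZInd W r₁ r₂ N 1 ω = 1 ∨ ZInd W r₁ r₂ N 1 ω = -11}).toReal) ^ (2 * M)) ≤
      ℙ[|⋃ n ∈ Finset.Icc 1 M, {ω | ZInd W r₁ r₂ N (2 * n) ω = -1}]
        (⋂ n ∈ Finset.Icc 1 (2 * M),
          {ω | ZInd W r₁ r₂ N n ω = 0 ∨ ZInd W r₁ r₂ N n ω = -1}) :=
  stmt17_general W hWmeas P hlaw hindep r₁ r₂ N M hpos
end
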